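/- Let (X, μ) be a probability space, T : X → X a measure-preserving map, and f ∈ L¹(X, μ). Let ε, δ > 0. Suppose g is a measurable function with |g| ≤ C μ-almost everywhere and ‖f − g‖₁ ≤ δε, suppose p ≥ 1 is a natural number with ‖A_p g‖₁ ≤ δε/2, and suppose n₀ ≥ 1 is a natural number with n₀ ≥ 4(p−1)C/δ. Then μ({x : ∃ n ≥ n₀, |Aₙ f(x)| > 2δ}) ≤ 2ε. (This gives an explicit modulus of almost-sure convergence of the Birkhoff averages of an L¹ function.) -/

import Mathlib

open MeasureTheory Finset

/-- The `n`-th Birkhoff average of `f` along `T`: `Aₙ f = (1/n) ∑_{i<n} f ∘ T^i`. -/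
noncomputable def birkhoffAvg {X : Type*} (T : X → X) (f : X → ℝ) (n : ℕ) (x : X) : ℝ :=
  (n : ℝ)⁻¹ * ∑ i ∈ Finset.range n, f (T^[i] x)

/-!
Write `f = (f - g) + (g - A_p g) + A_p g`. Shifting a Birkhoff sum of length `n` by `k` steps
changes only `2k` of its terms, so for `|g| ≤ C` the averages `Aₙ g` and `Aₙ (A_p g)` differ by at
most `2(p-1)C/n ≤ δ/2` once `n ≥ n₀`. The other two pieces are small in `L¹`, and Hopf's maximal
ergodic inequality `μ{∃ n, Aₙ φ > l} ≤ ‖φ‖₁ / l` for `φ ≥ 0` bounds the sets where the averages of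
their absolute values exceed `δ`, resp. `δ/2`, by `ε` each.
-/

open Filter Function

section RunningMax

variable {α : Type*} (T : α → α) (φ : α → ℝ)

noncomputable def birkhoffMax : ℕ → α → ℝ
  | 0 => 0
  | N + 1 => birkhoffMax N ⊔ birkhoffSum T φ (N + 1)

variable {T φ}

theorem birkhoffMax_mono : Monotone (birkhoffMax T φ) :=
  monotone_nat_of_le_succ fun _ => le_sup_left

theorem birkhoffMax_nonneg (N : ℕ) (x : α) : 0 ≤ birkhoffMax T φ N x :=
  birkhoffMax_mono (Nat.zero_le N) x

theorem birkhoffSum_le_birkhoffMax (N : ℕ) (x : α) :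
    birkhoffSum T φ N x ≤ birkhoffMax T φ N x := by
  cases N with
  | zero => simp [birkhoffMax]
  | succ N => exact le_sup_right

theorem birkhoffMax_succ_apply (N : ℕ) (x : α) :
    birkhoffMax T φ (N + 1) x = max 0 (φ x + birkhoffMax T φ N (T x)) := by
  induction N with
  | zero => simp [birkhoffMax]
  | succ N ih =>
    simp only [birkhoffMax, Pi.sup_apply] at ih ⊢
    rw [ih, birkhoffSum_succ' T φ (N + 1), max_assoc, max_add_add_left]

theorem birkhoffMax_le_max_apply (N : ℕ) (x : α) :
    birkhoffMax T φ N x ≤ max 0 (φ x + birkhoffMax T φ N (T x)) :=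
  birkhoffMax_succ_apply (T := T) (φ := φ) N x ▸ birkhoffMax_mono N.le_succ x

theorem exists_birkhoffSum_pos_of_birkhoffMax_pos {N : ℕ} {x : α} (h : 0 < birkhoffMax T φ N x) :
    ∃ n, 0 < birkhoffSum T φ n x := by
  induction N with
  | zero => simp [birkhoffMax] at h
  | succ N ih => exact (lt_max_iff.mp h).elim ih fun h => ⟨N + 1, h⟩

theorem iUnion_birkhoffMax_pos :
    ⋃ N, {x | 0 < birkhoffMax T φ N x} = {x | ∃ n, 0 < birkhoffSum T φ n x} := by
  ext x
  simp only [Set.mem_iUnion, Set.mem_ofPred_eq]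
  exact ⟨fun ⟨_, h⟩ => exists_birkhoffSum_pos_of_birkhoffMax_pos h,
    fun ⟨n, h⟩ => ⟨n, h.trans_le (birkhoffSum_le_birkhoffMax n x)⟩⟩

theorem birkhoffSum_sub_const (c : ℝ) (n : ℕ) (x : α) :
    birkhoffSum T (fun y => φ y - c) n x = birkhoffSum T φ n x - n * c := by
  simp [birkhoffSum, Finset.sum_sub_distrib]

theorem exists_lt_birkhoffAverage_iff {l : ℝ} (hl : 0 ≤ l) (x : α) :
    (∃ n, l < birkhoffAverage ℝ T φ n x) ↔ ∃ n, 0 < birkhoffSum T (fun y => φ y - l) n x := by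
  refine exists_congr fun n => ?_
  rcases n.eq_zero_or_pos with rfl | hn
  · simpa using hl
  · rw [birkhoffAverage, smul_eq_mul, lt_inv_mul_iff₀ (by exact_mod_cast hn),
      birkhoffSum_sub_const, sub_pos]

end RunningMax

section MaximalErgodic

variable {α : Type*} [MeasurableSpace α] {μ : Measure α} {T : α → α} {φ : α → ℝ}

theorem measurable_birkhoffSum (hT : Measurable T) (hφ : Measurable φ) (n : ℕ) :
    Measurable (birkhoffSum T φ n) :=
  Finset.measurable_sum _ fun i _ => hφ.comp (hT.iterate i)

theorem measurable_birkhoffMax (hT : Measurable T) (hφ : Measurable φ) (N : ℕ) :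
    Measurable (birkhoffMax T φ N) := by
  induction N with
  | zero => exact measurable_const
  | succ N ih => exact ih.sup (measurable_birkhoffSum hT hφ _)

theorem MeasureTheory.MeasurePreserving.integrable_birkhoffSum (hT : MeasurePreserving T μ μ)
    (hφ : Integrable φ μ) (n : ℕ) : Integrable (birkhoffSum T φ n) μ :=
  integrable_finsetSum _ fun i _ => (hT.iterate i).integrable_comp_of_integrable hφ

theorem MeasureTheory.MeasurePreserving.integrable_birkhoffAverage (hT : MeasurePreserving T μ μ)
    (hφ : Integrable φ μ) (n : ℕ) : Integrable (birkhoffAverage ℝ T φ n) μ :=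
  (hT.integrable_birkhoffSum hφ n).smul (n : ℝ)⁻¹

theorem MeasureTheory.MeasurePreserving.integrable_birkhoffMax (hT : MeasurePreserving T μ μ)
    (hφ : Integrable φ μ) (N : ℕ) : Integrable (birkhoffMax T φ N) μ := by
  induction N with
  | zero => exact integrable_zero _ _ _
  | succ N ih => exact ih.sup (hT.integrable_birkhoffSum hφ _)

theorem MeasureTheory.MeasurePreserving.setIntegral_birkhoffMax_pos_nonneg
    (hT : MeasurePreserving T μ μ) (hφm : Measurable φ) (hφ : Integrable φ μ) (N : ℕ) :
    0 ≤ ∫ x in {x | 0 < birkhoffMax T φ N x}, φ x ∂μ := by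
  set M := birkhoffMax T φ N
  set A := {x | 0 < M x}
  have hMm : Measurable M := measurable_birkhoffMax hT.measurable hφm N
  have hA : MeasurableSet A := measurableSet_lt measurable_const hMm
  have hMi : Integrable M μ := hT.integrable_birkhoffMax hφ N
  have hMTi : Integrable (fun x => M (T x)) μ := hT.integrable_comp_of_integrable hMi
  have hdiff : Integrable (fun x => M x - M (T x)) μ := hMi.sub hMTi
  have hzero : ∫ x, (M x - M (T x)) ∂μ = 0 := by
    rw [integral_sub hMi hMTi, ← integral_map hT.aemeasurable hMm.aestronglyMeasurable,
      hT.map_eq, sub_self]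
  have hon : ∫ x in A, (M x - M (T x)) ∂μ ≤ ∫ x in A, φ x ∂μ := by
    refine setIntegral_mono_on hdiff.integrableOn hφ.integrableOn hA fun x hx => ?_
    have hle : M x ≤ max 0 (φ x + M (T x)) := birkhoffMax_le_max_apply N x
    have hxA : 0 < M x := hx
    rcases le_max_iff.mp hle with h | h <;> linarith
  have hoff : ∫ x in Aᶜ, (M x - M (T x)) ∂μ ≤ 0 := by
    refine setIntegral_nonpos hA.compl fun x hx => ?_
    have hMT : 0 ≤ M (T x) := birkhoffMax_nonneg N (T x)
    have hMx : M x ≤ 0 := not_lt.mp hx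
    linarith
  linarith [integral_add_compl hA hdiff]

/-- Hopf's maximal ergodic theorem. -/
theorem MeasureTheory.MeasurePreserving.setIntegral_exists_birkhoffSum_pos_nonneg
    (hT : MeasurePreserving T μ μ) (hφm : Measurable φ) (hφ : Integrable φ μ) :
    0 ≤ ∫ x in {x | ∃ n, 0 < birkhoffSum T φ n x}, φ x ∂μ := by
  rw [← iUnion_birkhoffMax_pos]
  refine ge_of_tendsto' (tendsto_setIntegral_of_monotone (fun N => ?_) ?_ hφ.integrableOn)
    (hT.setIntegral_birkhoffMax_pos_nonneg hφm hφ)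
  · exact measurableSet_lt measurable_const (measurable_birkhoffMax hT.measurable hφm N)
  · exact fun N N' h x hx => hx.trans_le (birkhoffMax_mono h x)

theorem MeasureTheory.MeasurePreserving.mul_measureReal_exists_lt_birkhoffAverage_le
    [IsFiniteMeasure μ] (hT : MeasurePreserving T μ μ) (hφm : Measurable φ) (hφ : Integrable φ μ)
    {l : ℝ} (hl : 0 ≤ l) :
    l * μ.real {x | ∃ n, l < birkhoffAverage ℝ T φ n x} ≤
      ∫ x in {x | ∃ n, l < birkhoffAverage ℝ T φ n x}, φ x ∂μ := by
  simp_rw [exists_lt_birkhoffAverage_iff hl]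
  have hopf := hT.setIntegral_exists_birkhoffSum_pos_nonneg (hφm.sub_const l)
    (hφ.sub (integrable_const l))
  rw [integral_sub hφ.integrableOn (integrable_const l).integrableOn, setIntegral_const,
    smul_eq_mul] at hopf
  linarith

theorem MeasureTheory.MeasurePreserving.measure_exists_lt_birkhoffAverage_le
    [IsFiniteMeasure μ] (hT : MeasurePreserving T μ μ) (hφ : Integrable φ μ) (hφ0 : 0 ≤ᵐ[μ] φ)
    {l : ℝ} (hl : 0 < l) :
    μ {x | ∃ n, l < birkhoffAverage ℝ T φ n x} ≤ ENNReal.ofReal ((∫ x, φ x ∂μ) / l) := by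
  set ψ := hφ.1.mk φ
  have hφψ : φ =ᵐ[μ] ψ := hφ.1.ae_eq_mk
  have hψm : Measurable ψ := hφ.1.stronglyMeasurable_mk.measurable
  have hψ : Integrable ψ μ := hφ.congr hφψ
  have hAvg : ∀ᵐ x ∂μ, ∀ n, birkhoffAverage ℝ T φ n x = birkhoffAverage ℝ T ψ n x :=
    ae_all_iff.2 fun n => hT.quasiMeasurePreserving.birkhoffAverage_ae_eq_of_ae_eq ℝ hφψ n
  have hset : {x | ∃ n, l < birkhoffAverage ℝ T φ n x} =ᵐ[μ]
      {x | ∃ n, l < birkhoffAverage ℝ T ψ n x} :=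
    eventuallyEq_set.2 (hAvg.mono fun x hx => by simp only [Set.mem_ofPred_eq, hx])
  rw [measure_congr hset, integral_congr_ae hφψ, ← ofReal_measureReal]
  refine ENNReal.ofReal_le_ofReal ((le_div_iff₀' hl).2 ?_)
  refine (hT.mul_measureReal_exists_lt_birkhoffAverage_le hψm hψ hl.le).trans ?_
  exact setIntegral_le_integral hψ (hφ0.trans_eq hφψ)

theorem MeasureTheory.MeasurePreserving.measure_exists_lt_birkhoffAverage_abs_le
    [IsFiniteMeasure μ] (hT : MeasurePreserving T μ μ) (hφ : Integrable φ μ) {l ε : ℝ} (hl : 0 < l)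
    (hφε : ∫ x, |φ x| ∂μ ≤ l * ε) :
    μ {x | ∃ n, l < birkhoffAverage ℝ T (fun y => |φ y|) n x} ≤ ENNReal.ofReal ε :=
  (hT.measure_exists_lt_birkhoffAverage_le hφ.abs (ae_of_all _ fun _ => abs_nonneg _) hl).trans
    (ENNReal.ofReal_le_ofReal ((div_le_iff₀' hl).2 hφε))

end MaximalErgodic

section BoundedOrbit

variable {α : Type*}

theorem birkhoffSum_birkhoffSum_comm {M : Type*} [AddCommMonoid M] (T : α → α) (g : α → M)
    (m n : ℕ) (x : α) :
    birkhoffSum T (birkhoffSum T g m) n x = birkhoffSum T (birkhoffSum T g n) m x := by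
  simp only [birkhoffSum, ← iterate_add_apply]
  rw [sum_comm]
  simp only [Nat.add_comm]

theorem birkhoffAverage_birkhoffAverage_comm (T : α → α) (g : α → ℝ) (m n : ℕ) (x : α) :
    birkhoffAverage ℝ T (birkhoffAverage ℝ T g m) n x =
      birkhoffAverage ℝ T (birkhoffAverage ℝ T g n) m x := by
  have hsmul : ∀ (c : ℝ) (h : α → ℝ) (k : ℕ),
      birkhoffSum T (c • h) k x = c • birkhoffSum T h k x := fun c h k => by
    simp only [birkhoffSum, Pi.smul_apply, smul_sum]
  have hA : ∀ k, birkhoffAverage ℝ T g k = (k : ℝ)⁻¹ • birkhoffSum T g k := fun _ => rfl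
  rw [birkhoffAverage, birkhoffAverage, hA, hA, hsmul, hsmul, birkhoffSum_birkhoffSum_comm,
    smul_smul, smul_smul, mul_comm]

variable {T : α → α} {g : α → ℝ} {C : ℝ} {x : α}

theorem abs_birkhoffSum_le_of_forall_abs_le (hC : ∀ m, |g (T^[m] x)| ≤ C) (n : ℕ) :
    |birkhoffSum T g n x| ≤ n * C :=
  calc |birkhoffSum T g n x| ≤ ∑ k ∈ range n, |g (T^[k] x)| := abs_sum_le_sum_abs _ _
    _ ≤ ∑ _k ∈ range n, C := sum_le_sum fun k _ => hC k
    _ = n * C := by simp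

theorem abs_birkhoffSum_iterate_sub_le (hC : ∀ m, |g (T^[m] x)| ≤ C) (n k : ℕ) :
    |birkhoffSum T g n (T^[k] x) - birkhoffSum T g n x| ≤ 2 * k * C := by
  have hshift : birkhoffSum T g n (T^[k] x) - birkhoffSum T g n x =
      birkhoffSum T g k (T^[n] x) - birkhoffSum T g k x := by
    have h₁ := birkhoffSum_add T g k n x
    have h₂ := birkhoffSum_add T g n k x
    rw [add_comm k n] at h₁
    linarith
  have hCn : ∀ m, |g (T^[m] (T^[n] x))| ≤ C := fun m => by
    rw [← iterate_add_apply]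
    exact hC _
  rw [hshift]
  calc _ ≤ |birkhoffSum T g k (T^[n] x)| + |birkhoffSum T g k x| := abs_sub _ _
    _ ≤ k * C + k * C := add_le_add (abs_birkhoffSum_le_of_forall_abs_le hCn k)
        (abs_birkhoffSum_le_of_forall_abs_le hC k)
    _ = 2 * k * C := by ring

theorem abs_birkhoffAverage_iterate_sub_le (hC : ∀ m, |g (T^[m] x)| ≤ C) (n k : ℕ) :
    |birkhoffAverage ℝ T g n (T^[k] x) - birkhoffAverage ℝ T g n x| ≤ 2 * k * C / n := by
  rw [birkhoffAverage, birkhoffAverage, ← smul_sub, smul_eq_mul, abs_mul, abs_inv, Nat.abs_cast,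
    inv_mul_eq_div]
  gcongr
  exact abs_birkhoffSum_iterate_sub_le hC n k

theorem abs_birkhoffAverage_sub_birkhoffAverage_birkhoffAverage_le {p : ℕ} (hp : 0 < p)
    (hC : ∀ m, |g (T^[m] x)| ≤ C) (n : ℕ) :
    |birkhoffAverage ℝ T g n x - birkhoffAverage ℝ T (birkhoffAverage ℝ T g p) n x| ≤
      2 * (p - 1) * C / n := by
  have hp' : (0 : ℝ) < p := by exact_mod_cast hp
  have hC0 : 0 ≤ C := (abs_nonneg _).trans (hC 0)
  have hconst : birkhoffAverage ℝ T g n x =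
      (p : ℝ)⁻¹ * ∑ _k ∈ range p, birkhoffAverage ℝ T g n x := by
    rw [sum_const, card_range, nsmul_eq_mul, inv_mul_cancel_left₀ hp'.ne']
  have hcomm : birkhoffAverage ℝ T (birkhoffAverage ℝ T g p) n x =
      (p : ℝ)⁻¹ * ∑ k ∈ range p, birkhoffAverage ℝ T g n (T^[k] x) :=
    birkhoffAverage_birkhoffAverage_comm T g p n x
  rw [hcomm, hconst, ← mul_sub, ← sum_sub_distrib, abs_mul, abs_inv, Nat.abs_cast,
    inv_mul_le_iff₀ hp']
  calc _ ≤ ∑ k ∈ range p, |birkhoffAverage ℝ T g n x - birkhoffAverage ℝ T g n (T^[k] x)| :=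
        abs_sum_le_sum_abs _ _
    _ ≤ ∑ _k ∈ range p, 2 * (p - 1) * C / n := sum_le_sum fun k hk => by
        rw [abs_sub_comm]
        refine (abs_birkhoffAverage_iterate_sub_le hC n k).trans ?_
        have : (k : ℝ) ≤ p - 1 := by
          rw [le_sub_iff_add_le]; exact_mod_cast mem_range.mp hk
        gcongr
    _ = p * (2 * (p - 1) * C / n) := by simp

theorem abs_birkhoffAverage_le_birkhoffAverage_abs (T : α → α) (f : α → ℝ) (n : ℕ) (x : α) :
    |birkhoffAverage ℝ T f n x| ≤ birkhoffAverage ℝ T (fun y => |f y|) n x := by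
  simp only [birkhoffAverage, birkhoffSum, smul_eq_mul, abs_mul, abs_inv, Nat.abs_cast]
  gcongr
  exact abs_sum_le_sum_abs _ _

theorem abs_birkhoffAverage_le_of_forall_abs_le (f : α → ℝ) {p : ℕ} (hp : 0 < p)
    (hC : ∀ m, |g (T^[m] x)| ≤ C) (n : ℕ) :
    |birkhoffAverage ℝ T f n x| ≤ birkhoffAverage ℝ T (fun y => |f y - g y|) n x +
      2 * (p - 1) * C / n + birkhoffAverage ℝ T (fun y => |birkhoffAverage ℝ T g p y|) n x := by
  have hsub : birkhoffAverage ℝ T f n x - birkhoffAverage ℝ T g n x =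
      birkhoffAverage ℝ T (fun y => f y - g y) n x :=
    (congrFun (congrFun (birkhoffAverage_sub (R := ℝ) (f := T) (g := f) (g' := g)) n) x).symm
  calc |birkhoffAverage ℝ T f n x|
      = |(birkhoffAverage ℝ T f n x - birkhoffAverage ℝ T g n x) +
          (birkhoffAverage ℝ T g n x - birkhoffAverage ℝ T (birkhoffAverage ℝ T g p) n x) +
          birkhoffAverage ℝ T (birkhoffAverage ℝ T g p) n x| := by ring_nf
    _ ≤ _ := (abs_add_three _ _ _).trans (add_le_add_three
        (hsub ▸ abs_birkhoffAverage_le_birkhoffAverage_abs T _ n x)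
        (abs_birkhoffAverage_sub_birkhoffAverage_birkhoffAverage_le hp hC n)
        (abs_birkhoffAverage_le_birkhoffAverage_abs T _ n x))

theorem lt_birkhoffAverage_or_lt_birkhoffAverage_of_lt_abs {f : α → ℝ} {p n₀ n : ℕ} {δ : ℝ}
    (hp : 0 < p) (hδ : 0 < δ) (hC : ∀ m, |g (T^[m] x)| ≤ C)
    (hn₀C : 4 * ((p : ℝ) - 1) * C / δ ≤ n₀) (hn : n₀ ≤ n)
    (hfn : 2 * δ < |birkhoffAverage ℝ T f n x|) :
    δ < birkhoffAverage ℝ T (fun y => |f y - g y|) n x ∨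
      δ / 2 < birkhoffAverage ℝ T (fun y => |birkhoffAverage ℝ T g p y|) n x := by
  by_contra! h
  have hn' : (0 : ℝ) < n := by
    rcases n.eq_zero_or_pos with rfl | hn'
    · simp only [birkhoffAverage_zero, abs_zero] at hfn
      linarith
    · exact_mod_cast hn'
  have hpC : 2 * ((p : ℝ) - 1) * C / n ≤ δ / 2 := by
    rw [div_le_iff₀ hδ] at hn₀C
    rw [div_le_iff₀ hn']
    nlinarith [(Nat.cast_le (α := ℝ)).2 hn]
  linarith [abs_birkhoffAverage_le_of_forall_abs_le f hp hC n]

end BoundedOrbit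

theorem birkhoffAvg_eq_birkhoffAverage {X : Type*} (T : X → X) (f : X → ℝ) :
    birkhoffAvg T f = birkhoffAverage ℝ T f :=
  rfl

theorem birkhoff_effective_as_convergence_L1_general {X : Type*} [MeasurableSpace X]
    (μ : Measure X) [IsProbabilityMeasure μ]
    (T : X → X) (hT : MeasurePreserving T μ μ)
    (f : X → ℝ) (hf : Integrable f μ)
    (ε δ : ℝ) (hε : 0 < ε) (hδ : 0 < δ)
    (g : X → ℝ) (hgm : Measurable g) (C : ℝ) (hgC : ∀ᵐ x ∂μ, |g x| ≤ C)
    (hfg : ∫ x, |f x - g x| ∂μ ≤ δ * ε)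
    (p : ℕ) (hp : 1 ≤ p) (hAp : ∫ x, |birkhoffAvg T g p x| ∂μ ≤ δ * ε / 2)
    (n₀ : ℕ) (hn₀C : 4 * ((p : ℝ) - 1) * C / δ ≤ (n₀ : ℝ)) :
    μ {x | ∃ n, n₀ ≤ n ∧ 2 * δ < |birkhoffAvg T f n x|} ≤ ENNReal.ofReal (2 * ε) := by
  simp only [birkhoffAvg_eq_birkhoffAverage] at hAp ⊢
  have hgi : Integrable g μ := .of_bound hgm.aestronglyMeasurable C hgC
  set E₁ := {x | ∃ n, δ < birkhoffAverage ℝ T (fun y => |f y - g y|) n x}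
  set E₂ := {x | ∃ n, δ / 2 < birkhoffAverage ℝ T (fun y => |birkhoffAverage ℝ T g p y|) n x}
  have hE₁ : μ E₁ ≤ ENNReal.ofReal ε :=
    hT.measure_exists_lt_birkhoffAverage_abs_le (hf.sub hgi) hδ hfg
  have hE₂ : μ E₂ ≤ ENNReal.ofReal ε :=
    hT.measure_exists_lt_birkhoffAverage_abs_le (hT.integrable_birkhoffAverage hgi p) (half_pos hδ)
      (by linarith)
  have hsub : {x | ∃ n, n₀ ≤ n ∧ 2 * δ < |birkhoffAverage ℝ T f n x|} ≤ᵐ[μ]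
      (E₁ ∪ E₂ : Set X) := by
    have horbit : ∀ᵐ x ∂μ, ∀ m, |g (T^[m] x)| ≤ C :=
      ae_all_iff.2 fun m => (hT.iterate m).quasiMeasurePreserving.ae hgC
    filter_upwards [horbit] with x hx ⟨n, hn, hfn⟩
    exact (lt_birkhoffAverage_or_lt_birkhoffAverage_of_lt_abs hp hδ hx hn₀C hn hfn).imp
      (fun h => ⟨n, h⟩) fun h => ⟨n, h⟩
  calc μ {x | ∃ n, n₀ ≤ n ∧ 2 * δ < |birkhoffAverage ℝ T f n x|} ≤ μ (E₁ ∪ E₂) :=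
        measure_mono_ae hsub
    _ ≤ μ E₁ + μ E₂ := measure_union_le _ _
    _ ≤ ENNReal.ofReal ε + ENNReal.ofReal ε := add_le_add hE₁ hE₂
    _ = ENNReal.ofReal (2 * ε) := by rw [two_mul, ENNReal.ofReal_add hε.le hε.le]

/-- Explicit modulus of almost-sure convergence of the Birkhoff averages of an `L¹`
function: if `g` is a bounded (`|g| ≤ C` a.e.) measurable function with `‖f - g‖₁ ≤ δε` and
`‖A_p g‖₁ ≤ δε/2`, then for `n₀ ≥ 4(p-1)C/δ` one has `μ{x : ∃ n ≥ n₀, |Aₙ f x| > 2δ} ≤ 2ε`. -/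
theorem birkhoff_effective_as_convergence_L1 {X : Type*} [MeasurableSpace X]
    (μ : Measure X) [IsProbabilityMeasure μ]
    (T : X → X) (hT : MeasurePreserving T μ μ)
    (f : X → ℝ) (hf : Integrable f μ)
    (ε δ : ℝ) (hε : 0 < ε) (hδ : 0 < δ)
    (g : X → ℝ) (hgm : Measurable g) (C : ℝ) (hgC : ∀ᵐ x ∂μ, |g x| ≤ C)
    (hfg : ∫ x, |f x - g x| ∂μ ≤ δ * ε)
    (p : ℕ) (hp : 1 ≤ p) (hAp : ∫ x, |birkhoffAvg T g p x| ∂μ ≤ δ * ε / 2)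
    (n₀ : ℕ) (hn₀ : 1 ≤ n₀) (hn₀C : 4 * ((p : ℝ) - 1) * C / δ ≤ (n₀ : ℝ)) :
    μ {x | ∃ n, n₀ ≤ n ∧ 2 * δ < |birkhoffAvg T f n x|} ≤ ENNReal.ofReal (2 * ε) :=
  birkhoff_effective_as_convergence_L1_general μ T hT f hf ε δ hε hδ g hgm C hgC hfg p hp hAp n₀
    hn₀C
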